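/- arXiv:math/9806116 — 4 statements merged into one kernel-verified Lean document; each statement's English description precedes it below -/
import Mathlib

section
/- Let u_0, …, u_N be points of ℝ^n whose affine span is all of ℝ^n, and define f : ℝ^n → ℝ by f(x) = log( Σ_{i=0}^N exp(2⟨u_i, x⟩) ). Then the map g : ℝ^n → ℝ^n given by g(x) = (1/2)∇f(x) = Σ_{i=0}^N u_i · exp(2⟨u_i,x⟩)/Σ_{j=0}^N exp(2⟨u_j,x⟩) is injective, and its range is exactly the interior of the convex hull of {u_0, …, u_N}. -/
/-!
Writing `g = ½ ∇f`, the pairing `⟪g x - g y, x - y⟫` compares the averages of `bᵢ = ⟪uᵢ, x - y⟫`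
for the weights `cᵢ = exp (2⟪uᵢ, y⟫)` and `cᵢ exp (2 bᵢ)`; by a weighted Chebyshev inequality it is
positive unless all `bᵢ` coincide, which the spanning hypothesis rules out. So `g` is strictly
monotone, hence injective. A convex combination with positive weights of a spanning family lies in
the interior of its hull, which gives one inclusion. Conversely, for `w` in the interior,
`f x - 2⟪w, x⟫` grows linearly in `‖x‖` because `f x ≥ 2 maxᵢ ⟪uᵢ, x⟫`; a minimiser is a critical
point, where `g x = w`.
-/

open Real RealInnerProductSpace Finset Filter Topology

theorem sum_mul_sum_lt_sum_mul_sum_of_strictMono {ι : Type*} [Fintype ι] {c b : ι → ℝ}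
    {φ : ℝ → ℝ} (hφ : StrictMono φ) (hc : ∀ i, 0 < c i) {i₀ j₀ : ι} (hb : b i₀ ≠ b j₀) :
    (∑ i, c i * b i) * ∑ i, c i * φ (b i) < (∑ i, c i) * ∑ i, c i * φ (b i) * b i := by
  have hterm : ∀ i j, 0 ≤ c i * c j * ((b i - b j) * (φ (b i) - φ (b j))) := fun i j => by
    refine mul_nonneg (mul_pos (hc i) (hc j)).le ?_
    rcases le_total (b i) (b j) with h | h
    · exact mul_nonneg_of_nonpos_of_nonpos (sub_nonpos.2 h) (sub_nonpos.2 (hφ.monotone h))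
    · exact mul_nonneg (sub_nonneg.2 h) (sub_nonneg.2 (hφ.monotone h))
  have hterm₀ : 0 < c i₀ * c j₀ * ((b i₀ - b j₀) * (φ (b i₀) - φ (b j₀))) := by
    refine mul_pos (mul_pos (hc i₀) (hc j₀)) ?_
    rcases hb.lt_or_gt with h | h
    · exact mul_pos_of_neg_of_neg (sub_neg.2 h) (sub_neg.2 (hφ h))
    · exact mul_pos (sub_pos.2 h) (sub_pos.2 (hφ h))
  have hpos : 0 < ∑ i, ∑ j, c i * c j * ((b i - b j) * (φ (b i) - φ (b j))) :=
    sum_pos' (fun i _ => sum_nonneg fun j _ => hterm i j)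
      ⟨i₀, mem_univ _, sum_pos' (fun j _ => hterm i₀ j) ⟨j₀, mem_univ _, hterm₀⟩⟩
  -- Expanding the double sum gives twice the difference of the two sides.
  have hexpand : ∀ i j, c i * c j * ((b i - b j) * (φ (b i) - φ (b j))) =
      c i * φ (b i) * b i * c j - c i * b i * (c j * φ (b j))
        - c i * φ (b i) * (c j * b j) + c i * (c j * φ (b j) * b j) := fun i j => by ring
  simp_rw [hexpand, sum_add_distrib, sum_sub_distrib, ← mul_sum, ← sum_mul] at hpos
  linarith

section MomentMap

variable {E : Type*} [NormedAddCommGroup E] [InnerProductSpace ℝ E] {ι : Type*}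

theorem exists_inner_ne_of_affineSpan_eq_top {u : ι → E} (hspan : affineSpan ℝ (Set.range u) = ⊤)
    {v : E} (hv : v ≠ 0) : ∃ i j, ⟪u i, v⟫ ≠ ⟪u j, v⟫ := by
  by_contra! h
  have hle : vectorSpan ℝ (Set.range u) ≤ LinearMap.ker (innerₛₗ ℝ v) := by
    rw [vectorSpan_def, Submodule.span_le]
    rintro _ ⟨_, ⟨i, rfl⟩, _, ⟨j, rfl⟩, rfl⟩
    simp only [SetLike.mem_coe, LinearMap.mem_ker, vsub_eq_sub, innerₛₗ_apply_apply,
      inner_sub_right]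
    rw [real_inner_comm (u i), real_inner_comm (u j), h i j, sub_self]
  rw [AffineSubspace.vectorSpan_eq_top_of_affineSpan_eq_top ℝ E E hspan, top_le_iff,
    LinearMap.ker_eq_top] at hle
  exact hv (inner_self_eq_zero.1 (LinearMap.congr_fun hle v))

theorem exists_inner_add_le_of_closedBall_subset_convexHull {u : ι → E} {w : E} {r : ℝ}
    (hr : 0 ≤ r) (hball : Metric.closedBall w r ⊆ convexHull ℝ (Set.range u)) (x : E) :
    ∃ i, ⟪w, x⟫ + r * ‖x‖ ≤ ⟪u i, x⟫ := by
  have hz : w + (r / ‖x‖) • x ∈ convexHull ℝ (Set.range u) := by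
    refine hball ?_
    rcases eq_or_ne x 0 with rfl | hx
    · simpa using hr
    · rw [Metric.mem_closedBall, dist_eq_norm, add_sub_cancel_left, norm_smul, norm_div,
        norm_norm, Real.norm_of_nonneg hr, div_mul_cancel₀ _ (norm_ne_zero_iff.2 hx)]
  obtain ⟨_, ⟨i, rfl⟩, hi⟩ := ((innerSL ℝ x).toLinearMap.convexOn convex_univ
    ).exists_ge_of_mem_convexHull (Set.subset_univ _) hz
  refine ⟨i, ?_⟩
  have hrx : r / ‖x‖ * ‖x‖ ^ 2 = r * ‖x‖ := by
    rcases eq_or_ne ‖x‖ 0 with h | h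
    · simp [h]
    · field_simp
  simp only [ContinuousLinearMap.coe_coe, innerSL_apply_apply, inner_add_right,
    real_inner_smul_right, real_inner_self_eq_norm_sq, hrx] at hi
  rwa [real_inner_comm, real_inner_comm x]

variable [Fintype ι]

theorem exists_sum_smul_eq_of_mem_convexHull_range {u : ι → E} {y : E}
    (hy : y ∈ convexHull ℝ (Set.range u)) :
    ∃ η : ι → ℝ, (∀ i, 0 ≤ η i) ∧ ∑ i, η i = 1 ∧ ∑ i, η i • u i = y := by
  classical
  rw [convexHull_range_eq_exists_affineCombination] at hy
  obtain ⟨s, η, hη₀, hη₁, rfl⟩ := hy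
  refine ⟨fun i => if i ∈ s then η i else 0, fun i => ?_, ?_, ?_⟩
  · dsimp only
    split_ifs with hi
    exacts [hη₀ i hi, le_rfl]
  · simpa [sum_ite_mem] using hη₁
  · simp [s.affineCombination_eq_linear_combination u η hη₁, ite_smul, sum_ite_mem]

theorem sum_smul_mem_interior_convexHull [FiniteDimensional ℝ E] {u : ι → E}
    (hspan : affineSpan ℝ (Set.range u) = ⊤) {w : ι → ℝ} (hw₀ : ∀ i, 0 < w i)
    (hw₁ : ∑ i, w i = 1) : ∑ i, w i • u i ∈ interior (convexHull ℝ (Set.range u)) := by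
  obtain ⟨y, hy⟩ := interior_convexHull_nonempty_iff_affineSpan_eq_top.2 hspan
  obtain ⟨η, -, hη₁, rfl⟩ := exists_sum_smul_eq_of_mem_convexHull_range (interior_subset hy)
  have hsmall : ∀ᶠ t in 𝓝 (0 : ℝ), ∀ i, t * η i < w i := eventually_all.2 fun i =>
    (continuous_id.mul continuous_const).continuousAt.eventually_lt continuousAt_const
      (by simpa using hw₀ i)
  obtain ⟨t, hwt, ht₀, ht₁⟩ :=
    ((hsmall.filter_mono nhdsWithin_le_nhds).and (Ioo_mem_nhdsGT one_pos)).exists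
  have hp : ∑ i, ((w i - t * η i) / (1 - t)) • u i ∈ convexHull ℝ (Set.range u) := by
    refine mem_convexHull_of_exists_fintype _ u (fun i => ?_) ?_ Set.mem_range_self rfl
    · exact div_nonneg (sub_nonneg.2 (hwt i).le) (sub_nonneg.2 ht₁.le)
    · rw [← sum_div, sum_sub_distrib, ← mul_sum, hw₁, hη₁, mul_one,
        div_self (sub_ne_zero.2 ht₁.ne')]
  have hcomb : t • ∑ i, η i • u i + (1 - t) • ∑ i, ((w i - t * η i) / (1 - t)) • u i
      = ∑ i, w i • u i := by
    simp only [smul_sum, smul_smul, ← sum_add_distrib, ← add_smul]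
    refine sum_congr rfl fun i _ => ?_
    rw [mul_div_cancel₀ _ (sub_ne_zero.2 ht₁.ne')]
    ring_nf
  exact hcomb ▸ (convex_convexHull ℝ _).combo_interior_self_mem_interior hy hp ht₀
    (sub_nonneg.2 ht₁.le) (add_sub_cancel t 1)

noncomputable def toricPotential (u : ι → E) (x : E) : ℝ :=
  log (∑ i, exp (2 * ⟪u i, x⟫))

noncomputable def momentWeight (u : ι → E) (x : E) (i : ι) : ℝ :=
  exp (2 * ⟪u i, x⟫) / ∑ j, exp (2 * ⟪u j, x⟫)

noncomputable def momentMap (u : ι → E) (x : E) : E :=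
  ∑ i, momentWeight u x i • u i

theorem inner_momentMap (u : ι → E) (x v : E) :
    ⟪momentMap u x, v⟫ = (∑ i, exp (2 * ⟪u i, x⟫) * ⟪u i, v⟫) / ∑ i, exp (2 * ⟪u i, x⟫) := by
  simp only [momentMap, momentWeight, sum_inner, real_inner_smul_left, div_mul_eq_mul_div, sum_div]

section Nonempty

variable [Nonempty ι] (u : ι → E)

theorem sum_exp_two_inner_pos (x : E) : 0 < ∑ i, exp (2 * ⟪u i, x⟫) :=
  sum_pos (fun _ _ => exp_pos _) univ_nonempty

theorem momentWeight_pos (x : E) (i : ι) : 0 < momentWeight u x i :=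
  div_pos (exp_pos _) (sum_exp_two_inner_pos u x)

theorem sum_momentWeight (x : E) : ∑ i, momentWeight u x i = 1 := by
  simp only [momentWeight]
  rw [← sum_div, div_self (sum_exp_two_inner_pos u x).ne']

theorem hasFDerivAt_toricPotential (x : E) :
    HasFDerivAt (toricPotential u) (innerSL ℝ ((2 : ℝ) • momentMap u x)) x := by
  have hexp : ∀ i, HasFDerivAt (fun y => exp (2 * ⟪u i, y⟫))
      (exp (2 * ⟪u i, x⟫) • (2 : ℝ) • innerSL ℝ (u i)) x := fun i =>
    (((innerSL ℝ (u i)).hasFDerivAt).const_mul 2).exp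
  refine ((HasFDerivAt.fun_sum fun i _ => hexp i).log
    (sum_exp_two_inner_pos u x).ne').congr_fderiv ?_
  ext v
  simp only [smul_apply, FunLike.coe_sum, Finset.sum_apply, innerSL_apply_apply, smul_eq_mul,
    real_inner_smul_left, inner_momentMap, mul_left_comm _ (2 : ℝ), ← mul_sum]
  ring

theorem continuous_toricPotential : Continuous (toricPotential u) :=
  continuous_iff_continuousAt.2 fun x => (hasFDerivAt_toricPotential u x).continuousAt

end Nonempty

theorem two_inner_le_toricPotential (u : ι → E) (x : E) (i : ι) :
    2 * ⟪u i, x⟫ ≤ toricPotential u x := by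
  have : Nonempty ι := ⟨i⟩
  rw [toricPotential, le_log_iff_exp_le (sum_exp_two_inner_pos u x)]
  exact single_le_sum (f := fun j => exp (2 * ⟪u j, x⟫)) (fun j _ => (exp_pos _).le) (mem_univ i)

theorem inner_momentMap_sub_momentMap_pos [Nonempty ι] {u : ι → E}
    (hspan : affineSpan ℝ (Set.range u) = ⊤) {x y : E} (hxy : x ≠ y) :
    0 < ⟪momentMap u x - momentMap u y, x - y⟫ := by
  obtain ⟨i₀, j₀, hne⟩ := exists_inner_ne_of_affineSpan_eq_top hspan (sub_ne_zero.2 hxy)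
  have hexp : ∀ i, exp (2 * ⟪u i, x⟫) = exp (2 * ⟪u i, y⟫) * exp (2 * ⟪u i, x - y⟫) := fun i => by
    rw [← exp_add, inner_sub_right]
    ring_nf
  have hcheb := sum_mul_sum_lt_sum_mul_sum_of_strictMono (b := fun i => ⟪u i, x - y⟫)
    (exp_strictMono.comp (strictMono_mul_left_of_pos two_pos)) (fun i => exp_pos (2 * ⟪u i, y⟫))
    hne
  have hx := sum_exp_two_inner_pos u x
  rw [inner_sub_left, inner_momentMap, inner_momentMap, sub_pos,
    div_lt_div_iff₀ (sum_exp_two_inner_pos u y) hx]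
  simp only [hexp, Function.comp_apply] at hx hcheb ⊢
  linarith

theorem momentMap_injective [Nonempty ι] {u : ι → E} (hspan : affineSpan ℝ (Set.range u) = ⊤) :
    Function.Injective (momentMap u) := fun x y hxy => by
  by_contra hne
  simpa [hxy] using inner_momentMap_sub_momentMap_pos hspan hne

theorem momentMap_mem_interior_convexHull [FiniteDimensional ℝ E] [Nonempty ι] {u : ι → E}
    (hspan : affineSpan ℝ (Set.range u) = ⊤) (x : E) :
    momentMap u x ∈ interior (convexHull ℝ (Set.range u)) :=
  sum_smul_mem_interior_convexHull hspan (momentWeight_pos u x) (sum_momentWeight u x)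

theorem tendsto_toricPotential_sub_inner_cocompact [FiniteDimensional ℝ E] {u : ι → E} {w : E}
    (hw : w ∈ interior (convexHull ℝ (Set.range u))) :
    Tendsto (fun x => toricPotential u x - 2 * ⟪w, x⟫) (cocompact E) atTop := by
  obtain ⟨r, hr, hball⟩ := Metric.nhds_basis_closedBall.mem_iff.1 (mem_interior_iff_mem_nhds.1 hw)
  refine tendsto_atTop_mono (fun x => ?_)
    (tendsto_norm_cocompact_atTop.const_mul_atTop (by positivity : (0 : ℝ) < 2 * r))
  obtain ⟨i, hi⟩ := exists_inner_add_le_of_closedBall_subset_convexHull hr.le hball x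
  linarith [two_inner_le_toricPotential u x i]

theorem momentMap_eq_of_isLocalMin [Nonempty ι] {u : ι → E} {w x : E}
    (hmin : IsLocalMin (fun y => toricPotential u y - 2 * ⟪w, y⟫) x) : momentMap u x = w := by
  have hderiv : HasFDerivAt (fun y => toricPotential u y - 2 * ⟪w, y⟫)
      (innerSL ℝ ((2 : ℝ) • (momentMap u x - w))) x := by
    refine ((hasFDerivAt_toricPotential u x).sub
      ((innerSL ℝ w).hasFDerivAt.const_mul 2)).congr_fderiv ?_
    ext v
    simp only [map_smul, sub_apply, smul_apply, coe_innerSL_apply, smul_eq_mul, smul_sub,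
      map_sub]
  have h := hmin.hasFDerivAt_eq_zero hderiv
  rwa [← map_zero (innerSL ℝ), innerSL_inj, smul_eq_zero, sub_eq_zero,
    or_iff_right two_ne_zero] at h

theorem interior_convexHull_subset_range_momentMap [FiniteDimensional ℝ E] [Nonempty ι]
    (u : ι → E) : interior (convexHull ℝ (Set.range u)) ⊆ Set.range (momentMap u) := fun w hw => by
  obtain ⟨x, hx⟩ := ((continuous_toricPotential u).sub
    (continuous_const.mul (continuous_const.inner continuous_id))).exists_forall_le
    (tendsto_toricPotential_sub_inner_cocompact hw)
  exact ⟨x, momentMap_eq_of_isLocalMin (Eventually.of_forall hx)⟩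

theorem range_momentMap [FiniteDimensional ℝ E] [Nonempty ι] {u : ι → E}
    (hspan : affineSpan ℝ (Set.range u) = ⊤) :
    Set.range (momentMap u) = interior (convexHull ℝ (Set.range u)) :=
  (Set.range_subset_iff.2 (momentMap_mem_interior_convexHull hspan)).antisymm
    (interior_convexHull_subset_range_momentMap u)

end MomentMap

/-- If the points `u 0, …, u N` affinely span `ℝⁿ`, then the map
`g = (1/2)∇f`, where `f x = log (∑ i, exp (2 ⟪u i, x⟫))`, i.e.
`g x = ∑ i, (exp (2⟪u i, x⟫) / ∑ j, exp (2⟪u j, x⟫)) • u i`, is injective and its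
range is exactly the interior of the convex hull of `{u 0, …, u N}`. -/
theorem statement2 (n N : ℕ) (u : Fin (N + 1) → EuclideanSpace ℝ (Fin n))
    (hspan : affineSpan ℝ (Set.range u) = ⊤)
    (g : EuclideanSpace ℝ (Fin n) → EuclideanSpace ℝ (Fin n))
    (hg : ∀ x, g x =
      ∑ i, (Real.exp (2 * ⟪u i, x⟫) / ∑ j, Real.exp (2 * ⟪u j, x⟫)) • u i) :
    Function.Injective g ∧
    Set.range g = interior (convexHull ℝ (Set.range u)) := by
  obtain rfl : g = momentMap u := funext hg
  exact ⟨momentMap_injective hspan, range_momentMap hspan⟩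
end

section
/- Let u_0, …, u_N be points of ℝ^n whose affine span is all of ℝ^n, let Q ⊂ ℝ^n be the convex hull of {u_0, …, u_N}, and define f : ℝ^n → ℝ by f(x) = log( Σ_{i=0}^N exp(2⟨u_i, x⟩) ). Then for each index s ∈ {1, …, n}, the function x ↦ (∂f/∂x_s)(x) · det( ∂²f/∂x_i∂x_j (x) ) is Lebesgue integrable on ℝ^n and ∫_{ℝ^n} (∂f/∂x_s)(x) · det( ∂²f/∂x_i∂x_j (x) ) dx = ∫_{2·Q} y_s dy, the integral on the right being taken over the dilated polytope 2·Q = {2y : y ∈ Q} with respect to Lebesgue measure on ℝ^n; equivalently, it equals 2^{n+1} ∫_Q y_s dy. -/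
/-!
With `wᵢ = 2 • uᵢ`, `f` is the log-sum-exp potential of the `wᵢ`. Its gradient is the
softmax-weighted mean `∇f x = ∑ pᵢ(x) • wᵢ`, a point of `conv w = 2 • Q`, and its Hessian is the
covariance `v ↦ ∑ pᵢ(x) ⟪wᵢ - ∇f x, v⟫ • (wᵢ - ∇f x)`, which is positive definite because the
`wᵢ` affinely span. So `∇f` is injective, and it hits every `y` in the interior of `2 • Q`:
there `f - ⟪y, ·⟫` grows at least linearly, so it has a minimiser, where `∇f = y`. The boundary
of a convex set is Lebesgue-null, so the change-of-variables formula for `∇f` turns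
`∫ ∂ₛf · det Hess f` into `∫_{2Q} yₛ dy`. The last identity is the scaling of Lebesgue measure.
-/

open Real MeasureTheory RealInnerProductSpace Pointwise

noncomputable def hessianMatrix {n : ℕ} (f : EuclideanSpace ℝ (Fin n) → ℝ)
    (x : EuclideanSpace ℝ (Fin n)) : Matrix (Fin n) (Fin n) ℝ :=
  fun i j =>
    iteratedFDeriv ℝ 2 f x ![EuclideanSpace.single i 1, EuclideanSpace.single j 1]

section InnerProductSpace

variable {E : Type*} [NormedAddCommGroup E] [InnerProductSpace ℝ E]

theorem eq_zero_of_forall_inner_sub_eq_zero {ι : Type*} {w : ι → E}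
    (hspan : affineSpan ℝ (Set.range w) = ⊤) {c v : E} (h : ∀ i, ⟪w i - c, v⟫ = 0) :
    v = 0 := by
  let H : AffineSubspace ℝ E := AffineSubspace.mk' c (LinearMap.ker (innerₛₗ ℝ v))
  have hle : affineSpan ℝ (Set.range w) ≤ H := by
    refine affineSpan_le.2 ?_
    rintro _ ⟨i, rfl⟩
    simpa [H, AffineSubspace.mem_mk', real_inner_comm] using h i
  have hv : v + c ∈ H := hle (hspan ▸ AffineSubspace.mem_top ℝ E _)
  simpa [H, AffineSubspace.mem_mk'] using hv

theorem LinearMap.IsSymmetric.det_pos [FiniteDimensional ℝ E] {T : E →ₗ[ℝ] E}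
    (hT : T.IsSymmetric) (hpos : ∀ v, v ≠ 0 → 0 < ⟪T v, v⟫) : 0 < LinearMap.det T := by
  rw [hT.det_eq_prod_eigenvalues rfl]
  refine Finset.prod_pos fun i _ => ?_
  obtain ⟨v, hv, hv0⟩ := (hT.hasEigenvalue_eigenvalues rfl i).exists_hasEigenvector
  rw [Module.End.mem_genEigenspace_one] at hv
  have := hpos v hv0
  rw [hv, real_inner_smul_left, real_inner_self_eq_norm_sq] at this
  exact pos_of_mul_pos_left this (sq_nonneg _)

theorem injective_of_hasFDerivAt_of_inner_pos {g : E → E} {g' : E → E →L[ℝ] E}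
    (hg : ∀ x, HasFDerivAt g (g' x) x) (hpos : ∀ x v, v ≠ 0 → 0 < ⟪g' x v, v⟫) :
    Function.Injective g := by
  intro x y hxy
  by_contra hne
  set d := y - x
  have hd : d ≠ 0 := sub_ne_zero.2 (Ne.symm hne)
  have hderiv (t : ℝ) :
      HasDerivAt (fun t : ℝ => ⟪d, g (x + t • d)⟫) ⟪d, g' (x + t • d) d⟫ t := by
    have hline : HasDerivAt (fun t : ℝ => x + t • d) d t := by
      simpa using ((hasDerivAt_id t).smul_const d).const_add x
    exact (innerSL ℝ d).hasFDerivAt.comp_hasDerivAt t ((hg _).comp_hasDerivAt t hline)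
  have hmono : StrictMono fun t : ℝ => ⟪d, g (x + t • d)⟫ :=
    strictMono_of_deriv_pos fun t => by
      rw [(hderiv t).deriv, real_inner_comm]
      exact hpos _ d hd
  have := hmono zero_lt_one
  simp [d, hxy] at this

end InnerProductSpace

section LogSumExp

variable {E ι : Type*} [NormedAddCommGroup E] [InnerProductSpace ℝ E] [Fintype ι] (w : ι → E)

noncomputable def logSumExp (x : E) : ℝ := Real.log (∑ i, Real.exp ⟪w i, x⟫)

noncomputable def softmax (x : E) (i : ι) : ℝ := Real.exp (⟪w i, x⟫ - logSumExp w x)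

noncomputable def logSumExpGrad (x : E) : E := ∑ i, softmax w x i • w i

noncomputable def logSumExpHess (x : E) : E →L[ℝ] E :=
  ∑ i, (softmax w x i • innerSL ℝ (w i - logSumExpGrad w x)).smulRight (w i)

theorem softmax_pos (x : E) (i : ι) : 0 < softmax w x i := Real.exp_pos _

variable [Nonempty ι]

theorem sum_exp_inner_pos (x : E) : 0 < ∑ i, Real.exp ⟪w i, x⟫ :=
  Finset.sum_pos (fun _ _ => Real.exp_pos _) Finset.univ_nonempty

theorem softmax_eq_div (x : E) (i : ι) :
    softmax w x i = Real.exp ⟪w i, x⟫ / ∑ j, Real.exp ⟪w j, x⟫ := by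
  rw [softmax, Real.exp_sub, logSumExp, Real.exp_log (sum_exp_inner_pos w x)]

theorem sum_softmax (x : E) : ∑ i, softmax w x i = 1 := by
  simp_rw [softmax_eq_div, ← Finset.sum_div]
  exact div_self (sum_exp_inner_pos w x).ne'

theorem logSumExpGrad_mem_convexHull (x : E) :
    logSumExpGrad w x ∈ convexHull ℝ (Set.range w) :=
  (convex_convexHull ℝ _).sum_mem (fun i _ => (softmax_pos w x i).le) (sum_softmax w x)
    fun i _ => subset_convexHull ℝ _ ⟨i, rfl⟩

theorem sum_softmax_smul_sub_logSumExpGrad (x : E) :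
    ∑ i, softmax w x i • (w i - logSumExpGrad w x) = 0 := by
  simp [smul_sub, Finset.sum_sub_distrib, ← Finset.sum_smul, sum_softmax, logSumExpGrad]

theorem hasFDerivAt_logSumExp (x : E) :
    HasFDerivAt (logSumExp w) (innerSL ℝ (logSumExpGrad w x)) x := by
  have hsum : HasFDerivAt (fun y => ∑ i, Real.exp ⟪w i, y⟫)
      (∑ i, Real.exp ⟪w i, x⟫ • innerSL ℝ (w i)) x :=
    HasFDerivAt.fun_sum fun i _ => (innerSL ℝ (w i)).hasFDerivAt.exp
  refine (hsum.log (sum_exp_inner_pos w x).ne').congr_fderiv ?_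
  ext v
  simp [logSumExpGrad, softmax_eq_div, Finset.mul_sum, div_eq_inv_mul, mul_assoc]

theorem hasFDerivAt_softmax (x : E) (i : ι) :
    HasFDerivAt (softmax w · i) (softmax w x i • innerSL ℝ (w i - logSumExpGrad w x)) x := by
  rw [map_sub]
  exact ((innerSL ℝ (w i)).hasFDerivAt.sub (hasFDerivAt_logSumExp w x)).exp

theorem hasFDerivAt_logSumExpGrad (x : E) :
    HasFDerivAt (logSumExpGrad w) (logSumExpHess w x) x :=
  HasFDerivAt.fun_sum fun i _ => (hasFDerivAt_softmax w x i).smul_const (w i)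

theorem inner_logSumExpHess_apply (x v v' : E) :
    ⟪logSumExpHess w x v, v'⟫ = ∑ i, softmax w x i *
      (⟪w i - logSumExpGrad w x, v⟫ * ⟪w i - logSumExpGrad w x, v'⟫) := by
  set g := logSumExpGrad w x
  have hcentered : ∑ i, softmax w x i * ⟪w i - g, v⟫ = 0 := by
    simpa [sum_inner, real_inner_smul_left] using
      congrArg (⟪·, v⟫) (sum_softmax_smul_sub_logSumExpGrad w x)
  have hlhs : ⟪logSumExpHess w x v, v'⟫ = ∑ i, softmax w x i * ⟪w i - g, v⟫ * ⟪w i, v'⟫ := by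
    simp [logSumExpHess, g, sum_inner, real_inner_smul_left, inner_sub_left]
  calc ⟪logSumExpHess w x v, v'⟫
      = ∑ i, softmax w x i * ⟪w i - g, v⟫ * ⟪w i, v'⟫
        - (∑ i, softmax w x i * ⟪w i - g, v⟫) * ⟪g, v'⟫ := by
        rw [hlhs, hcentered, zero_mul, sub_zero]
    _ = _ := by
      simp only [Finset.sum_mul, ← Finset.sum_sub_distrib, inner_sub_left]
      exact Finset.sum_congr rfl fun i _ => by ring

theorem isSymmetric_logSumExpHess (x : E) :
    (logSumExpHess w x : E →ₗ[ℝ] E).IsSymmetric := fun v v' => by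
  rw [ContinuousLinearMap.coe_coe, real_inner_comm _ v, inner_logSumExpHess_apply,
    inner_logSumExpHess_apply]
  simp only [mul_comm (⟪_, v⟫)]

theorem inner_logSumExpHess_self_pos (hspan : affineSpan ℝ (Set.range w) = ⊤) (x : E) {v : E}
    (hv : v ≠ 0) : 0 < ⟪logSumExpHess w x v, v⟫ := by
  obtain ⟨i, hi⟩ : ∃ i, ⟪w i - logSumExpGrad w x, v⟫ ≠ 0 := by
    by_contra! h
    exact hv (eq_zero_of_forall_inner_sub_eq_zero hspan h)
  rw [inner_logSumExpHess_apply]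
  exact Finset.sum_pos' (fun j _ => mul_nonneg (softmax_pos w x j).le (mul_self_nonneg _))
    ⟨i, Finset.mem_univ i, mul_pos (softmax_pos w x i) (mul_self_pos.2 hi)⟩

theorem det_logSumExpHess_pos [FiniteDimensional ℝ E] (hspan : affineSpan ℝ (Set.range w) = ⊤)
    (x : E) : 0 < (logSumExpHess w x).det :=
  (isSymmetric_logSumExpHess w x).det_pos fun _ hv => inner_logSumExpHess_self_pos w hspan x hv

theorem inner_le_logSumExp_of_mem_convexHull {q : E} (hq : q ∈ convexHull ℝ (Set.range w))
    (x : E) : ⟪q, x⟫ ≤ logSumExp w x := by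
  have hconvex : Convex ℝ {q : E | ⟪x, q⟫ ≤ logSumExp w x} :=
    convex_halfSpace_le (innerₛₗ ℝ x).isLinear _
  have hw : Set.range w ⊆ {q : E | ⟪x, q⟫ ≤ logSumExp w x} := by
    rintro _ ⟨i, rfl⟩
    show ⟪x, w i⟫ ≤ logSumExp w x
    rw [real_inner_comm, logSumExp,
      Real.le_log_iff_exp_le (sum_exp_inner_pos w x)]
    exact Finset.single_le_sum (f := fun j => Real.exp ⟪w j, x⟫)
      (fun _ _ => (Real.exp_pos _).le) (Finset.mem_univ i)
  simpa [real_inner_comm] using convexHull_min hw hconvex hq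

theorem exists_pos_mul_norm_le_logSumExp_sub_inner {y : E}
    (hy : y ∈ interior (convexHull ℝ (Set.range w))) :
    ∃ ε > 0, ∀ x, ε * ‖x‖ ≤ logSumExp w x - ⟪y, x⟫ := by
  obtain ⟨ε, hε, hball⟩ := Metric.mem_nhds_iff.1 (mem_interior_iff_mem_nhds.1 hy)
  refine ⟨ε / 2, half_pos hε, fun x => ?_⟩
  set z := y + (ε / 2 * ‖x‖⁻¹) • x
  have hz : z ∈ Metric.ball y ε := by
    rw [Metric.mem_ball, dist_eq_norm, add_sub_cancel_left, norm_smul, Real.norm_eq_abs,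
      abs_of_nonneg (by positivity), mul_assoc]
    nlinarith [inv_mul_le_one (a := ‖x‖)]
  have hzx : ⟪z, x⟫ = ⟪y, x⟫ + ε / 2 * ‖x‖ := by
    rw [inner_add_left, real_inner_smul_left, real_inner_self_eq_norm_sq, mul_assoc, sq,
      ← mul_assoc ‖x‖⁻¹, inv_mul_mul_self]
  linarith [inner_le_logSumExp_of_mem_convexHull w (hball hz) x]

variable [FiniteDimensional ℝ E]

theorem exists_logSumExpGrad_eq {y : E} (hy : y ∈ interior (convexHull ℝ (Set.range w))) :
    ∃ x, logSumExpGrad w x = y := by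
  obtain ⟨ε, hε, hbound⟩ := exists_pos_mul_norm_le_logSumExp_sub_inner w hy
  have hderiv (x : E) : HasFDerivAt (fun x => logSumExp w x - ⟪y, x⟫)
      (innerSL ℝ (logSumExpGrad w x) - innerSL ℝ y) x :=
    (hasFDerivAt_logSumExp w x).sub (innerSL ℝ y).hasFDerivAt
  have hcoercive : Filter.Tendsto (fun x => logSumExp w x - ⟪y, x⟫)
      (Filter.cocompact E) Filter.atTop :=
    Filter.tendsto_atTop_mono hbound (tendsto_norm_cocompact_atTop.const_mul_atTop hε)
  have hcont : Continuous fun x => logSumExp w x - ⟪y, x⟫ :=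
    continuous_iff_continuousAt.2 fun x => (hderiv x).continuousAt
  obtain ⟨x, hmin⟩ := hcont.exists_forall_le hcoercive
  have hlocal : IsLocalMin (fun x => logSumExp w x - ⟪y, x⟫) x :=
    Filter.Eventually.of_forall hmin
  have hcrit := hlocal.hasFDerivAt_eq_zero (hderiv x)
  refine ⟨x, sub_eq_zero.1 ((inner_self_eq_zero (𝕜 := ℝ)).1 ?_)⟩
  simpa only [sub_apply, innerSL_apply_apply, ← inner_sub_left,
    zero_apply] using DFunLike.congr_fun hcrit (logSumExpGrad w x - y)

theorem range_logSumExpGrad_ae_eq [MeasurableSpace E] [BorelSpace E] (μ : Measure E)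
    [μ.IsAddHaarMeasure] : Set.range (logSumExpGrad w) =ᵐ[μ] convexHull ℝ (Set.range w) := by
  have hclosed : IsClosed (convexHull ℝ (Set.range w)) :=
    ((Set.finite_range w).isCompact_convexHull (𝕜 := ℝ)).isClosed
  refine ae_eq_set.2
    ⟨?_, measure_mono_null ?_ ((convex_convexHull ℝ (Set.range w)).addHaar_frontier μ)⟩
  · rw [Set.sdiff_eq_empty.2 (Set.range_subset_iff.2 (logSumExpGrad_mem_convexHull w)),
      measure_empty]
  · rw [hclosed.frontier_eq]
    exact Set.sdiff_subset_sdiff_right fun y hy => exists_logSumExpGrad_eq w hy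

theorem integrable_and_integral_abs_det_logSumExpHess_smul [MeasurableSpace E] [BorelSpace E]
    (μ : Measure E) [μ.IsAddHaarMeasure] {F : Type*} [NormedAddCommGroup F] [NormedSpace ℝ F]
    (hspan : affineSpan ℝ (Set.range w) = ⊤) {φ : E → F}
    (hφ : IntegrableOn φ (convexHull ℝ (Set.range w)) μ) :
    Integrable (fun x => |(logSumExpHess w x).det| • φ (logSumExpGrad w x)) μ ∧
      ∫ x, |(logSumExpHess w x).det| • φ (logSumExpGrad w x) ∂μ =
        ∫ y in convexHull ℝ (Set.range w), φ y ∂μ := by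
  have hderiv (x : E) (_ : x ∈ Set.univ) :
      HasFDerivWithinAt (logSumExpGrad w) (logSumExpHess w x) Set.univ x :=
    (hasFDerivAt_logSumExpGrad w x).hasFDerivWithinAt
  have hinj : Set.InjOn (logSumExpGrad w) Set.univ :=
    (injective_of_hasFDerivAt_of_inner_pos (hasFDerivAt_logSumExpGrad w)
      fun x _ hv => inner_logSumExpHess_self_pos w hspan x hv).injOn
  have himage : logSumExpGrad w '' Set.univ =ᵐ[μ] convexHull ℝ (Set.range w) := by
    rw [Set.image_univ]
    exact range_logSumExpGrad_ae_eq w μ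
  constructor
  · rw [← integrableOn_univ, ← integrableOn_image_iff_integrableOn_abs_det_fderiv_smul μ
      MeasurableSet.univ hderiv hinj, IntegrableOn, Measure.restrict_congr_set himage]
    exact hφ
  · rw [← setIntegral_univ, ← integral_image_eq_integral_abs_det_fderiv_smul μ
      MeasurableSet.univ hderiv hinj, setIntegral_congr_set himage]

end LogSumExp

section EuclideanSpace

variable {n : ℕ} {f : EuclideanSpace ℝ (Fin n) → ℝ}
  {g : EuclideanSpace ℝ (Fin n) → EuclideanSpace ℝ (Fin n)}

theorem fderiv_apply_single_of_hasFDerivAt_innerSL {x : EuclideanSpace ℝ (Fin n)}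
    (hf : HasFDerivAt f (innerSL ℝ (g x)) x) (s : Fin n) :
    fderiv ℝ f x (EuclideanSpace.single s 1) = g x s := by
  simp [hf.fderiv, EuclideanSpace.inner_single_right]

theorem det_hessianMatrix_of_hasFDerivAt_innerSL
    {g' : EuclideanSpace ℝ (Fin n) → EuclideanSpace ℝ (Fin n) →L[ℝ] EuclideanSpace ℝ (Fin n)}
    (hf : ∀ x, HasFDerivAt f (innerSL ℝ (g x)) x) (hg : ∀ x, HasFDerivAt g (g' x) x)
    (x : EuclideanSpace ℝ (Fin n)) : (hessianMatrix f x).det = (g' x).det := by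
  have hfderiv : fderiv ℝ f = fun y => innerSL ℝ (g y) := funext fun y => (hf y).fderiv
  have hsecond : fderiv ℝ (fderiv ℝ f) x = (innerSL ℝ).comp (g' x) := by
    rw [hfderiv]
    exact ((innerSL ℝ).hasFDerivAt.comp x (hg x)).fderiv
  let b := (EuclideanSpace.basisFun (Fin n) ℝ).toBasis
  have hmatrix : hessianMatrix f x = (LinearMap.toMatrix b b (g' x)).transpose := by
    ext i j
    simp [hessianMatrix, iteratedFDeriv_two_apply, hsecond, LinearMap.toMatrix_apply, b,
      EuclideanSpace.inner_single_right]
  rw [hmatrix, Matrix.det_transpose, LinearMap.det_toMatrix]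

theorem setIntegral_smul_set_apply (Q : Set (EuclideanSpace ℝ (Fin n))) {R : ℝ} (hR : 0 < R)
    (s : Fin n) : ∫ y in R • Q, y s = R ^ (n + 1) * ∫ y in Q, y s := by
  have h :=
    Measure.setIntegral_comp_smul_of_pos volume (fun y : EuclideanSpace ℝ (Fin n) => y s) Q hR
  simp only [PiLp.smul_apply, smul_eq_mul, integral_const_mul, finrank_euclideanSpace_fin] at h
  field_simp at h
  rw [pow_succ, ← h]
  ring

end EuclideanSpace

/-- For points `u 0, …, u N` affinely spanning `ℝⁿ`, with
`Q = conv {u 0, …, u N}` and `f x = log (∑ i, exp (2 ⟪u i, x⟫))`, the function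
`x ↦ (∂f/∂x_s)(x) · det Hess f (x)` is Lebesgue-integrable on `ℝⁿ` and its integral
equals `∫_{2Q} y_s dy`, which in turn equals `2 ^ (n+1) · ∫_Q y_s dy`. -/
theorem statement3 (n N : ℕ) (u : Fin (N + 1) → EuclideanSpace ℝ (Fin n))
    (hspan : affineSpan ℝ (Set.range u) = ⊤)
    (Q : Set (EuclideanSpace ℝ (Fin n))) (hQ : Q = convexHull ℝ (Set.range u))
    (f : EuclideanSpace ℝ (Fin n) → ℝ)
    (hf : ∀ x, f x = Real.log (∑ i, Real.exp (2 * ⟪u i, x⟫)))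
    (s : Fin n) :
    Integrable
      (fun x => fderiv ℝ f x (EuclideanSpace.single s 1) * (hessianMatrix f x).det)
      volume ∧
    (∫ x, fderiv ℝ f x (EuclideanSpace.single s 1) * (hessianMatrix f x).det ∂volume) =
      (∫ y in ((2 : ℝ) • Q), y s ∂volume) ∧
    (∫ y in ((2 : ℝ) • Q), y s ∂volume) = 2 ^ (n + 1) * ∫ y in Q, y s ∂volume := by
  set w := fun i => (2 : ℝ) • u i
  have hrange : Set.range w = (2 : ℝ) • Set.range u := Set.range_smul _ _
  have hwspan : affineSpan ℝ (Set.range w) = ⊤ := by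
    rw [hrange, ← AffineSubspace.smul_span, hspan,
      AffineSubspace.smul_top (isUnit_of_invertible 2)]
  have hhull : convexHull ℝ (Set.range w) = (2 : ℝ) • Q := by rw [hrange, convexHull_smul, hQ]
  have hfw : f = logSumExp w := funext fun x => by simp [hf, logSumExp, w, real_inner_smul_left]
  have hintegrand (x : EuclideanSpace ℝ (Fin n)) :
      fderiv ℝ f x (EuclideanSpace.single s 1) * (hessianMatrix f x).det =
        |(logSumExpHess w x).det| • logSumExpGrad w x s := by
    rw [hfw, fderiv_apply_single_of_hasFDerivAt_innerSL (hasFDerivAt_logSumExp w x),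
      det_hessianMatrix_of_hasFDerivAt_innerSL (hasFDerivAt_logSumExp w)
        (hasFDerivAt_logSumExpGrad w), abs_of_pos (det_logSumExpHess_pos w hwspan x),
      smul_eq_mul, mul_comm]
  have hcoord : IntegrableOn (fun y : EuclideanSpace ℝ (Fin n) => y s)
      (convexHull ℝ (Set.range w)) volume :=
    (EuclideanSpace.proj s).continuous.continuousOn.integrableOn_compact
      ((Set.finite_range w).isCompact_convexHull (𝕜 := ℝ))
  obtain ⟨hint, hintegral⟩ :=
    integrable_and_integral_abs_det_logSumExpHess_smul w volume hwspan hcoord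
  simp_rw [hintegrand]
  rw [hhull] at hintegral
  exact ⟨hint, hintegral, setIntegral_smul_set_apply Q two_pos s⟩
end

section
/- In the polynomial ring ℂ[X_0, X_1, X_2, X_3], the radical of the ideal generated by X_0X_2, X_2², X_0X_3 equals the intersection of the two prime ideals (X_0, X_2) and (X_2, X_3); equivalently, radical( Ideal.span {X_0X_2, X_2², X_0X_3} ) = Ideal.span {X_2, X_0X_3}. In particular, the vanishing set in ℂ⁴ of {X_0X_2, X_2², X_0X_3} is the union of the two coordinate planes {x_0 = x_2 = 0} ∪ {x_2 = x_3 = 0}. -/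
open MvPolynomial

/-- The variable `Xᵢ` in the polynomial ring `ℂ[X₀, X₁, X₂, X₃]`. -/
noncomputable def Xv (i : Fin 4) : MvPolynomial (Fin 4) ℂ := MvPolynomial.X i

private lemma sub_aeval_mem (J : Ideal (MvPolynomial (Fin 4) ℂ))
    (f : Fin 4 → MvPolynomial (Fin 4) ℂ) (hf : ∀ i, X i - f i ∈ J)
    (p : MvPolynomial (Fin 4) ℂ) : p - aeval f p ∈ J := by
  induction p using MvPolynomial.induction_on with
  | C a => simp
  | add p q hp hq =>
      have : p + q - aeval f (p + q) = (p - aeval f p) + (q - aeval f q) := by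
        simp only [map_add]; ring
      rw [this]; exact J.add_mem hp hq
  | mul_X p i hp =>
      have : p * X i - aeval f (p * X i) =
          (p - aeval f p) * X i + aeval f p * (X i - f i) := by
        simp only [map_mul, aeval_X]; ring
      rw [this]
      exact J.add_mem (J.mul_mem_right _ hp) (J.mul_mem_left _ (hf i))

noncomputable def phi1 : MvPolynomial (Fin 4) ℂ →ₐ[ℂ] MvPolynomial (Fin 4) ℂ :=
  aeval (fun i => if i = 0 ∨ i = 2 then 0 else X i)

noncomputable def phi2 : MvPolynomial (Fin 4) ℂ →ₐ[ℂ] MvPolynomial (Fin 4) ℂ :=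
  aeval (fun i => if i = 2 ∨ i = 3 then 0 else X i)

private lemma ker_phi1 : RingHom.ker phi1 = Ideal.span {Xv 0, Xv 2} := by
  apply le_antisymm
  · intro p hp
    have h0 : Xv 0 ∈ Ideal.span {Xv 0, Xv 2} :=
      Ideal.subset_span (by simp)
    have h2 : Xv 2 ∈ Ideal.span {Xv 0, Xv 2} :=
      Ideal.subset_span (by simp)
    have key := sub_aeval_mem (Ideal.span {Xv 0, Xv 2})
      (fun i => if i = 0 ∨ i = 2 then 0 else X i) (fun i => by
        fin_cases i <;> simp_all [Xv]) p
    rw [show aeval (fun i : Fin 4 => if i = 0 ∨ i = 2 then 0 else X i) p = 0 from hp,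
      sub_zero] at key
    exact key
  · rw [Ideal.span_le]
    rintro q hq
    simp only [Set.mem_insert_iff, Set.mem_singleton_iff] at hq
    rcases hq with rfl | rfl <;> simp [RingHom.mem_ker, phi1, Xv]

private lemma ker_phi2 : RingHom.ker phi2 = Ideal.span {Xv 2, Xv 3} := by
  apply le_antisymm
  · intro p hp
    have h2 : Xv 2 ∈ Ideal.span {Xv 2, Xv 3} := Ideal.subset_span (by simp)
    have h3 : Xv 3 ∈ Ideal.span {Xv 2, Xv 3} := Ideal.subset_span (by simp)
    have key := sub_aeval_mem (Ideal.span {Xv 2, Xv 3})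
      (fun i => if i = 2 ∨ i = 3 then 0 else X i) (fun i => by
        fin_cases i <;> simp_all [Xv]) p
    rw [show aeval (fun i : Fin 4 => if i = 2 ∨ i = 3 then 0 else X i) p = 0 from hp,
      sub_zero] at key
    exact key
  · rw [Ideal.span_le]
    rintro q hq
    simp only [Set.mem_insert_iff, Set.mem_singleton_iff] at hq
    rcases hq with rfl | rfl <;> simp [RingHom.mem_ker, phi2, Xv]

private lemma prime1 : (Ideal.span {Xv 0, Xv 2}).IsPrime := by
  rw [← ker_phi1]; exact RingHom.ker_isPrime _

private lemma prime2 : (Ideal.span {Xv 2, Xv 3}).IsPrime := by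
  rw [← ker_phi2]; exact RingHom.ker_isPrime _

private lemma X0_notMem : Xv 0 ∉ Ideal.span {Xv 2, Xv 3} := by
  rw [← ker_phi2]
  simp [RingHom.mem_ker, phi2, Xv, MvPolynomial.X_ne_zero]

private lemma inf_eq : Ideal.span {Xv 0, Xv 2} ⊓ Ideal.span {Xv 2, Xv 3} =
    Ideal.span {Xv 2, Xv 0 * Xv 3} := by
  apply le_antisymm
  · intro p hp
    rw [Ideal.mem_inf] at hp
    obtain ⟨hp1, hp2⟩ := hp
    rw [Ideal.mem_span_pair] at hp1
    obtain ⟨a, b, hab⟩ := hp1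
    have haX0 : a * Xv 0 ∈ Ideal.span {Xv 2, Xv 3} := by
      have : a * Xv 0 = p - b * Xv 2 := by rw [← hab]; ring
      rw [this]
      exact Ideal.sub_mem _ hp2
        (Ideal.mul_mem_left _ _ (Ideal.subset_span (by simp)))
    have ha : a ∈ Ideal.span {Xv 2, Xv 3} := by
      rcases prime2.mem_or_mem haX0 with h | h
      · exact h
      · exact absurd h X0_notMem
    rw [Ideal.mem_span_pair] at ha
    obtain ⟨c, d, hcd⟩ := ha
    rw [Ideal.mem_span_pair]
    exact ⟨c * Xv 0 + b, d, by rw [← hab, ← hcd]; ring⟩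
  · rw [Ideal.span_le]
    rintro q hq
    simp only [Set.mem_insert_iff, Set.mem_singleton_iff] at hq
    rcases hq with rfl | rfl
    · exact ⟨Ideal.subset_span (by simp), Ideal.subset_span (by simp)⟩
    · constructor
      · exact Ideal.mul_mem_right _ _ (Ideal.subset_span (by simp))
      · exact Ideal.mul_mem_left _ _ (Ideal.subset_span (by simp))

private lemma rad_eq :
    (Ideal.span {Xv 0 * Xv 2, Xv 2 ^ 2, Xv 0 * Xv 3}).radical =
      Ideal.span {Xv 2, Xv 0 * Xv 3} := by
  set I := Ideal.span {Xv 0 * Xv 2, Xv 2 ^ 2, Xv 0 * Xv 3}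
  set J := Ideal.span ({Xv 2, Xv 0 * Xv 3} : Set (MvPolynomial (Fin 4) ℂ))
  apply le_antisymm
  · have hIJ : I ≤ J := by
      rw [Ideal.span_le]
      rintro q hq
      simp only [Set.mem_insert_iff, Set.mem_singleton_iff] at hq
      rcases hq with rfl | rfl | rfl
      · exact Ideal.mul_mem_left _ _ (Ideal.subset_span (by simp))
      · rw [sq]; exact Ideal.mul_mem_left _ _ (Ideal.subset_span (by simp))
      · exact Ideal.subset_span (by simp)
    have h1 : J.radical ≤ Ideal.span {Xv 0, Xv 2} := by
      rw [← prime1.radical]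
      exact Ideal.radical_mono ((le_of_eq inf_eq.symm).trans inf_le_left)
    have h2 : J.radical ≤ Ideal.span {Xv 2, Xv 3} := by
      rw [← prime2.radical]
      exact Ideal.radical_mono ((le_of_eq inf_eq.symm).trans inf_le_right)
    calc I.radical ≤ J.radical := Ideal.radical_mono hIJ
      _ ≤ Ideal.span {Xv 0, Xv 2} ⊓ Ideal.span {Xv 2, Xv 3} := le_inf h1 h2
      _ = J := inf_eq
  · rw [Ideal.span_le]
    rintro q hq
    simp only [Set.mem_insert_iff, Set.mem_singleton_iff] at hq
    rcases hq with rfl | rfl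
    · exact ⟨2, Ideal.subset_span (by simp)⟩
    · exact Ideal.le_radical (Ideal.subset_span (by simp))

/-- In `ℂ[X₀, X₁, X₂, X₃]`, the radical of the ideal
`(X₀X₂, X₂², X₀X₃)` equals the intersection of the two prime ideals `(X₀, X₂)` and
`(X₂, X₃)`, equivalently equals the ideal `(X₂, X₀X₃)`; in particular the vanishing
set in `ℂ⁴` of `{X₀X₂, X₂², X₀X₃}` is `{x₀ = x₂ = 0} ∪ {x₂ = x₃ = 0}`. -/
theorem statement10 :
    (Ideal.span {Xv 0, Xv 2}).IsPrime ∧ (Ideal.span {Xv 2, Xv 3}).IsPrime ∧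
    (Ideal.span {Xv 0 * Xv 2, Xv 2 ^ 2, Xv 0 * Xv 3}).radical =
      Ideal.span {Xv 0, Xv 2} ⊓ Ideal.span {Xv 2, Xv 3} ∧
    (Ideal.span {Xv 0 * Xv 2, Xv 2 ^ 2, Xv 0 * Xv 3}).radical =
      Ideal.span {Xv 2, Xv 0 * Xv 3} ∧
    {x : Fin 4 → ℂ | ∀ p ∈ ({Xv 0 * Xv 2, Xv 2 ^ 2, Xv 0 * Xv 3} :
        Set (MvPolynomial (Fin 4) ℂ)), MvPolynomial.eval x p = 0} =
      {x : Fin 4 → ℂ | x 0 = 0 ∧ x 2 = 0} ∪ {x : Fin 4 → ℂ | x 2 = 0 ∧ x 3 = 0} := by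
  refine ⟨prime1, prime2, by rw [rad_eq, inf_eq], rad_eq, ?_⟩
  ext x
  simp only [Set.mem_setOf_eq, Set.mem_union, Set.mem_insert_iff, Set.mem_singleton_iff,
    forall_eq_or_imp, forall_eq, Xv, map_mul, map_pow, eval_X]
  constructor
  · rintro ⟨h1, h2, h3⟩
    have hx2 : x 2 = 0 := by
      have := sq_eq_zero_iff.mp h2; exact this
    rcases mul_eq_zero.mp h3 with h | h
    · exact Or.inl ⟨h, hx2⟩
    · exact Or.inr ⟨hx2, h⟩
  · rintro (⟨h0, h2⟩ | ⟨h2, h3⟩)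
    · simp [h0, h2]
    · simp [h2, h3]
end

section
/- In the polynomial ring ℂ[X_0, X_1, X_2, X_3], the radical of the ideal generated by X_0², X_0X_1, X_0X_2 − X_2X_3 equals the intersection of the two prime ideals (X_0, X_2) and (X_0, X_3); equivalently, radical( Ideal.span {X_0², X_0X_1, X_0X_2 − X_2X_3} ) = Ideal.span {X_0, X_2X_3}. In particular, the vanishing set in ℂ⁴ of {X_0², X_0X_1, X_0X_2 − X_2X_3} is the union of the two coordinate planes {x_0 = x_2 = 0} ∪ {x_0 = x_3 = 0}. -/
open MvPolynomial

/-- Substituting `0` for the variables in `S` changes a polynomial by an element of the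
ideal generated by those variables. -/
lemma sub_aeval_mem_s11 (p : Fin 4 → Prop) [DecidablePred p] (f : MvPolynomial (Fin 4) ℂ) :
    f - MvPolynomial.aeval (fun i => if p i then 0 else MvPolynomial.X i) f ∈
      Ideal.span (MvPolynomial.X '' {i | p i} : Set (MvPolynomial (Fin 4) ℂ)) := by
  induction f using MvPolynomial.induction_on with
  | C a => simp
  | add q r hq hr =>
      have := Ideal.add_mem _ hq hr
      convert this using 1
      simp only [map_add]
      ring
  | mul_X q i hq =>
      by_cases hi : p i
      · have hXi : (MvPolynomial.X i : MvPolynomial (Fin 4) ℂ) ∈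
            Ideal.span (MvPolynomial.X '' {i | p i}) :=
          Ideal.subset_span ⟨i, hi, rfl⟩
        simp only [map_mul, MvPolynomial.aeval_X, if_pos hi, mul_zero, sub_zero]
        exact Ideal.mul_mem_left _ q hXi
      · have := Ideal.mul_mem_right (MvPolynomial.X i) _ hq
        convert this using 1
        simp [hi]
        ring

lemma span_X_isPrime (p : Fin 4 → Prop) [DecidablePred p] :
    (Ideal.span (MvPolynomial.X '' {i | p i} : Set (MvPolynomial (Fin 4) ℂ))).IsPrime := by
  have hker : Ideal.span (MvPolynomial.X '' {i | p i} : Set (MvPolynomial (Fin 4) ℂ)) =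
      RingHom.ker ((MvPolynomial.aeval
        (fun i => if p i then 0 else MvPolynomial.X i)).toRingHom :
        MvPolynomial (Fin 4) ℂ →+* MvPolynomial (Fin 4) ℂ) := by
    apply le_antisymm
    · rw [Ideal.span_le]
      rintro _ ⟨i, hi, rfl⟩
      have hpi : p i := hi
      simp [RingHom.mem_ker, hpi]
    · intro f hf
      rw [RingHom.mem_ker] at hf
      have := sub_aeval_mem_s11 p f
      rw [show (MvPolynomial.aeval (fun i => if p i then 0 else MvPolynomial.X i)) f
        = 0 from hf, sub_zero] at this
      exact this
  rw [hker]
  exact RingHom.ker_isPrime _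

/-- In `ℂ[X₀, X₁, X₂, X₃]`, the radical of the ideal
`(X₀², X₀X₁, X₀X₂ − X₂X₃)` equals the intersection of the two prime ideals `(X₀, X₂)`
and `(X₀, X₃)`, equivalently equals the ideal `(X₀, X₂X₃)`; in particular the
vanishing set in `ℂ⁴` of `{X₀², X₀X₁, X₀X₂ − X₂X₃}` is
`{x₀ = x₂ = 0} ∪ {x₀ = x₃ = 0}`. -/
theorem statement11 :
    (Ideal.span {Xv 0, Xv 2}).IsPrime ∧ (Ideal.span {Xv 0, Xv 3}).IsPrime ∧
    (Ideal.span {Xv 0 ^ 2, Xv 0 * Xv 1, Xv 0 * Xv 2 - Xv 2 * Xv 3}).radical =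
      Ideal.span {Xv 0, Xv 2} ⊓ Ideal.span {Xv 0, Xv 3} ∧
    (Ideal.span {Xv 0 ^ 2, Xv 0 * Xv 1, Xv 0 * Xv 2 - Xv 2 * Xv 3}).radical =
      Ideal.span {Xv 0, Xv 2 * Xv 3} ∧
    {x : Fin 4 → ℂ | ∀ p ∈ ({Xv 0 ^ 2, Xv 0 * Xv 1, Xv 0 * Xv 2 - Xv 2 * Xv 3} :
        Set (MvPolynomial (Fin 4) ℂ)), MvPolynomial.eval x p = 0} =
      {x : Fin 4 → ℂ | x 0 = 0 ∧ x 2 = 0} ∪ {x : Fin 4 → ℂ | x 0 = 0 ∧ x 3 = 0} := by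
  classical
  -- primality of the two ideals
  have himg2 : (MvPolynomial.X '' {i : Fin 4 | i = 0 ∨ i = 2} :
      Set (MvPolynomial (Fin 4) ℂ)) = {Xv 0, Xv 2} := by
    rw [show {i : Fin 4 | i = 0 ∨ i = 2} = ({0, 2} : Set (Fin 4)) by ext i; simp,
      Set.image_pair]; rfl
  have himg3 : (MvPolynomial.X '' {i : Fin 4 | i = 0 ∨ i = 3} :
      Set (MvPolynomial (Fin 4) ℂ)) = {Xv 0, Xv 3} := by
    rw [show {i : Fin 4 | i = 0 ∨ i = 3} = ({0, 3} : Set (Fin 4)) by ext i; simp,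
      Set.image_pair]; rfl
  have hP1 : (Ideal.span {Xv 0, Xv 2}).IsPrime := by
    rw [← himg2]; exact span_X_isPrime _
  have hP2 : (Ideal.span {Xv 0, Xv 3}).IsPrime := by
    rw [← himg3]; exact span_X_isPrime _
  set I : Ideal (MvPolynomial (Fin 4) ℂ) :=
    Ideal.span {Xv 0 ^ 2, Xv 0 * Xv 1, Xv 0 * Xv 2 - Xv 2 * Xv 3} with hI
  set P1 : Ideal (MvPolynomial (Fin 4) ℂ) := Ideal.span {Xv 0, Xv 2} with hP1d
  set P2 : Ideal (MvPolynomial (Fin 4) ℂ) := Ideal.span {Xv 0, Xv 3} with hP2d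
  set J : Ideal (MvPolynomial (Fin 4) ℂ) := Ideal.span {Xv 0, Xv 2 * Xv 3} with hJd
  -- J ≤ I.radical
  have hX0P1 : Xv 0 ∈ P1 := Ideal.subset_span (Or.inl rfl)
  have hX2P1 : Xv 2 ∈ P1 := Ideal.subset_span (Or.inr rfl)
  have hX0P2 : Xv 0 ∈ P2 := Ideal.subset_span (Or.inl rfl)
  have hX3P2 : Xv 3 ∈ P2 := Ideal.subset_span (Or.inr rfl)
  have hX0rad : Xv 0 ∈ I.radical := ⟨2, Ideal.subset_span (Or.inl rfl)⟩
  have hgen3 : Xv 0 * Xv 2 - Xv 2 * Xv 3 ∈ I.radical :=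
    Ideal.le_radical (Ideal.subset_span (Or.inr (Or.inr rfl)))
  have hX23rad : Xv 2 * Xv 3 ∈ I.radical := by
    have h := Ideal.sub_mem _ (Ideal.mul_mem_right (Xv 2) _ hX0rad) hgen3
    simpa using h
  have hJle : J ≤ I.radical := by
    rw [hJd, Ideal.span_le]
    rintro f (rfl | rfl)
    · exact hX0rad
    · exact hX23rad
  -- I.radical ≤ P1 ⊓ P2
  have hIP : I.radical ≤ P1 ⊓ P2 := by
    refine le_inf (hP1.radical_le_iff.mpr ?_) (hP2.radical_le_iff.mpr ?_) <;>
      rw [hI, Ideal.span_le] <;> rintro f (rfl | rfl | rfl)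
    · exact pow_two (Xv 0) ▸ Ideal.mul_mem_right _ _ hX0P1
    · exact Ideal.mul_mem_right _ _ hX0P1
    · exact Ideal.sub_mem _ (Ideal.mul_mem_left _ _ hX2P1)
        (Ideal.mul_mem_right _ _ hX2P1)
    · exact pow_two (Xv 0) ▸ Ideal.mul_mem_right _ _ hX0P2
    · exact Ideal.mul_mem_right _ _ hX0P2
    · exact Ideal.sub_mem _ (Ideal.mul_mem_right _ _ hX0P2)
        (Ideal.mul_mem_left _ _ hX3P2)
  -- P1 ⊓ P2 ≤ J via monomial ideals
  have hPJ : P1 ⊓ P2 ≤ J := by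
    intro f hf
    rw [Submodule.mem_inf] at hf
    obtain ⟨hf1, hf2⟩ := hf
    rw [hP1d, ← himg2] at hf1
    rw [hP2d, ← himg3] at hf2
    rw [MvPolynomial.mem_ideal_span_X_image] at hf1 hf2
    have hJm : J = Ideal.span ((fun s => MvPolynomial.monomial s (1 : ℂ)) ''
        {Finsupp.single (0 : Fin 4) 1, Finsupp.single 2 1 + Finsupp.single 3 1}) := by
      rw [hJd, Set.image_pair]
      have e1 : Xv 0 = MvPolynomial.monomial (Finsupp.single (0 : Fin 4) 1) (1 : ℂ) := rfl
      have e2 : Xv 2 * Xv 3 = MvPolynomial.monomial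
          (Finsupp.single (2 : Fin 4) 1 + Finsupp.single 3 1) (1 : ℂ) := by
        rw [Xv, Xv, MvPolynomial.X, MvPolynomial.X, MvPolynomial.monomial_mul, one_mul]
      rw [e1, e2]
    rw [hJm, MvPolynomial.mem_ideal_span_monomial_image]
    intro m hm
    obtain ⟨i, hi, hi0⟩ := hf1 m hm
    obtain ⟨j, hj, hj0⟩ := hf2 m hm
    simp only [Set.mem_setOf_eq] at hi hj
    by_cases h0 : (m : Fin 4 →₀ ℕ) 0 ≠ 0
    · exact ⟨Finsupp.single 0 1, Or.inl rfl, by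
        rw [Finsupp.single_le_iff]; omega⟩
    · push_neg at h0
      have h2 : (m : Fin 4 →₀ ℕ) 2 ≠ 0 := by rcases hi with rfl | rfl <;> simp_all
      have h3 : (m : Fin 4 →₀ ℕ) 3 ≠ 0 := by rcases hj with rfl | rfl <;> simp_all
      refine ⟨_, Or.inr rfl, ?_⟩
      intro k
      fin_cases k <;> simp [Finsupp.single_apply] <;> omega
  -- combine
  have hrad12 : I.radical = P1 ⊓ P2 :=
    le_antisymm hIP (le_trans hPJ hJle)
  have hradJ : I.radical = J :=
    le_antisymm (le_trans hIP hPJ) hJle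
  refine ⟨hP1, hP2, hrad12, hradJ, ?_⟩
  -- vanishing set
  ext x
  simp only [Set.mem_setOf_eq, Set.mem_union, Set.mem_insert_iff, Set.mem_singleton_iff]
  constructor
  · intro h
    have e1 := h _ (Or.inl rfl)
    have e2 := h _ (Or.inr (Or.inr rfl))
    simp only [Xv, map_pow, map_mul, map_sub, MvPolynomial.eval_X] at e1 e2
    have hx0 : x 0 = 0 := by
      have := pow_eq_zero_iff (n := 2) (by norm_num) |>.mp e1
      exact this
    rw [hx0, zero_mul, zero_sub, neg_eq_zero] at e2
    rcases mul_eq_zero.mp e2 with h2 | h3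
    · exact Or.inl ⟨hx0, h2⟩
    · exact Or.inr ⟨hx0, h3⟩
  · rintro (⟨h0, h2⟩ | ⟨h0, h3⟩) <;> rintro p (rfl | rfl | rfl) <;>
      simp [Xv, h0, *]
end
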